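/- Let λ_j ∈ (0,1] for j = 0,...,d−1 with λ_0 < λ_j for j ≥ 1, let |γ_j|² be nonnegative weights summing to 1 with 0 < |γ_0|² < 1. Define λ̃_j = (π/4)(1−λ_j), |W| = Σ_j |γ_j|² cos(λ̃_j), χ = 4|W|² − 1, ξ_0 = |W| − cos(λ̃_0). Then the gain δ = 4|W| χ ξ_0 |γ_0|² satisfies δ ≥ c_⋆ |γ_0|² (1 − |γ_0|²), where c_⋆ = 4 cos(λ̃_0)(4cos²(λ̃_0) − 1)(cos(λ̃_1) − cos(λ̃_0)) > 0, with λ_1 the second-smallest eigenvalue. -/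
import Mathlib

open Real Finset

set_option maxHeartbeats 1000000

/-- Proposition 1, gain bound: with sorted eigenvalues
`λ_0 < λ_1 ≤ …` in `(0,1]` and weights `|γ_j|²` summing to 1 with
`0 < |γ_0|² < 1`, the gain `δ = 4|W| χ ξ_0 |γ_0|²` satisfies
`δ ≥ c_⋆ |γ_0|² (1 − |γ_0|²)` with
`c_⋆ = 4 cos(λ̃_0)(4cos²(λ̃_0) − 1)(cos(λ̃_1) − cos(λ̃_0)) > 0`. -/
theorem stmt_6 (d : ℕ) (hd : 2 ≤ d) (lam : Fin d → ℝ) (hmono : Monotone lam)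
    (hrange : ∀ j, lam j ∈ Set.Ioc (0 : ℝ) 1)
    (hmin : ∀ j : Fin d, j ≠ ⟨0, by omega⟩ → lam ⟨0, by omega⟩ < lam j)
    (γ : Fin d → ℂ) (hnorm : ∑ j, ‖γ j‖ ^ 2 = 1)
    (hγ0pos : 0 < ‖γ (⟨0, by omega⟩ : Fin d)‖ ^ 2)
    (hγ0lt : ‖γ (⟨0, by omega⟩ : Fin d)‖ ^ 2 < 1)
    (W χ ξ₀ δ cstar : ℝ)
    (hW : W = ∑ j, ‖γ j‖ ^ 2 * Real.cos (π / 4 * (1 - lam j)))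
    (hχ : χ = 4 * W ^ 2 - 1)
    (hξ : ξ₀ = W - Real.cos (π / 4 * (1 - lam ⟨0, by omega⟩)))
    (hδ : δ = 4 * W * χ * ξ₀ * ‖γ (⟨0, by omega⟩ : Fin d)‖ ^ 2)
    (hc : cstar = 4 * Real.cos (π / 4 * (1 - lam ⟨0, by omega⟩))
        * (4 * Real.cos (π / 4 * (1 - lam ⟨0, by omega⟩)) ^ 2 - 1)
        * (Real.cos (π / 4 * (1 - lam ⟨1, by omega⟩))
            - Real.cos (π / 4 * (1 - lam ⟨0, by omega⟩)))) :
    0 < cstar ∧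
      cstar * ‖γ (⟨0, by omega⟩ : Fin d)‖ ^ 2
          * (1 - ‖γ (⟨0, by omega⟩ : Fin d)‖ ^ 2) ≤ δ := by
  set z : Fin d := ⟨0, by omega⟩ with hz
  set o : Fin d := ⟨1, by omega⟩ with ho
  set c : Fin d → ℝ := fun j => Real.cos (π / 4 * (1 - lam j)) with hcdef
  set g : Fin d → ℝ := fun j => ‖γ j‖ ^ 2 with hgdef
  have hgnn : ∀ j, 0 ≤ g j := fun j => sq_nonneg _
  have hγ0lt' : g z < 1 := hγ0lt
  have hγ0pos' : 0 < g z := hγ0pos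
  have hpi := Real.pi_pos
  -- angle bounds
  have hang : ∀ j, 0 ≤ π / 4 * (1 - lam j) ∧ π / 4 * (1 - lam j) ≤ π / 4 := by
    intro j
    obtain ⟨h1, h2⟩ := hrange j
    constructor <;> nlinarith
  -- cos bounds
  have hcub : ∀ j, c j ≤ 1 := fun j => Real.cos_le_one _
  have hclb : ∀ j, Real.sqrt 2 / 2 ≤ c j := by
    intro j
    have := (hang j)
    calc Real.sqrt 2 / 2 = Real.cos (π / 4) := (Real.cos_pi_div_four).symm
    _ ≤ c j := Real.cos_le_cos_of_nonneg_of_le_pi this.1 (by linarith) this.2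
  have hsqrt2 : (1:ℝ) < Real.sqrt 2 / 2 * 2 := by
    nlinarith [Real.sq_sqrt (by norm_num : (2:ℝ) ≥ 0), Real.sqrt_nonneg 2]
  have hc0pos : 0 < c z := lt_of_lt_of_le (by nlinarith [Real.sqrt_nonneg 2]) (hclb z)
  -- cos is anti-monotone in lam reversed: lam i ≤ lam j → c i ≤ c j
  have hcmono : ∀ i j : Fin d, lam i ≤ lam j → c i ≤ c j := by
    intro i j hij
    exact Real.cos_le_cos_of_nonneg_of_le_pi (hang j).1 (by linarith [(hang i).2]) (by nlinarith)
  have hc01 : c z < c o := by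
    have hlt : lam z < lam o := hmin o (by simp [hz, ho, Fin.ext_iff])
    have := Real.strictAntiOn_cos (a := π / 4 * (1 - lam o)) (b := π / 4 * (1 - lam z))
      ⟨by linarith [(hang o).1], by linarith [(hang o).2]⟩
      ⟨by linarith [(hang z).1], by linarith [(hang z).2]⟩ (by nlinarith)
    exact this
  -- W ≥ c z
  have hWge : c z ≤ W := by
    rw [hW]
    calc c z = ∑ j, g j * c z := by rw [← Finset.sum_mul, hnorm, one_mul]
    _ ≤ ∑ j, g j * c j := by
        apply Finset.sum_le_sum
        intro j _
        exact mul_le_mul_of_nonneg_left (hcmono z j (hmono (by simp [hz, Fin.le_def]))) (hgnn j)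
  -- ξ₀ lower bound
  have hgsum : ∑ j ∈ Finset.univ.erase z, g j = 1 - g z := by
    have := Finset.add_sum_erase Finset.univ g (Finset.mem_univ z)
    linarith [hnorm]
  have hξge : (1 - g z) * (c o - c z) ≤ ξ₀ := by
    rw [hξ, hW]
    have h1 : ∑ j ∈ Finset.univ.erase z, g j * (c j - c z) = (∑ j, g j * c j) - c z := by
      rw [Finset.sum_erase (f := fun j => g j * (c j - c z)) _ (by ring)]
      simp only [mul_sub]
      rw [Finset.sum_sub_distrib, ← Finset.sum_mul, hnorm, one_mul]
    rw [show (∑ j, g j * Real.cos (π / 4 * (1 - lam j))) - Real.cos (π / 4 * (1 - lam z))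
        = (∑ j, g j * c j) - c z from rfl, ← h1, ← hgsum, Finset.sum_mul]
    apply Finset.sum_le_sum
    intro j hj
    have hjz : j ≠ z := Finset.ne_of_mem_erase hj
    have hoj : c o ≤ c j := by
      apply hcmono
      apply hmono
      simp only [ho, Fin.le_def]
      have : j.val ≠ 0 := fun h => hjz (Fin.ext h)
      omega
    have : c z ≤ c j := le_trans (le_of_lt hc01) hoj
    nlinarith [hgnn j]
  have hχge : 4 * c z ^ 2 - 1 ≤ χ := by rw [hχ]; nlinarith [hWge, hc0pos, sq_nonneg (W - c z), sq_nonneg (W + c z)]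
  have hχpos : (0:ℝ) < 4 * c z ^ 2 - 1 := by nlinarith [hclb z, Real.sqrt_nonneg 2]
  have hcstar : 0 < cstar := by
    rw [hc]
    show 0 < 4 * c z * (4 * c z ^ 2 - 1) * (c o - c z)
    exact mul_pos (mul_pos (by linarith) hχpos) (by linarith)
  refine ⟨hcstar, ?_⟩
  have hξnn : 0 ≤ (1 - g z) * (c o - c z) := by
    apply mul_nonneg <;> linarith
  have key : 4 * c z * (4 * c z ^ 2 - 1) * ((1 - g z) * (c o - c z))
      ≤ 4 * W * χ * ξ₀ := by
    have h1 : 4 * c z ≤ 4 * W := by linarith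
    have h2 : 4 * c z * (4 * c z ^ 2 - 1) ≤ 4 * W * χ :=
      mul_le_mul h1 hχge (le_of_lt hχpos) (by linarith)
    exact mul_le_mul h2 hξge hξnn (by nlinarith [hχpos, hχge, hc0pos])
  rw [hδ, hc]
  calc 4 * c z * (4 * c z ^ 2 - 1) * (c o - c z) * g z * (1 - g z)
      = 4 * c z * (4 * c z ^ 2 - 1) * ((1 - g z) * (c o - c z)) * g z := by ring
  _ ≤ 4 * W * χ * ξ₀ * g z := mul_le_mul_of_nonneg_right key (hgnn z)
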